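/- arXiv:2203.16088 — 9 statements merged into one kernel-verified Lean document; each statement's English description precedes it below -/
import Mathlib

section
/- Let b ≥ 2, K ≥ 1, and 1 ≤ k ≤ K. Set N = (bK)! + 1. Then bk + 1 divides k · b^N + 1. -/
/-- For `b ≥ 2`, `1 ≤ k ≤ K` and `N = (bK)! + 1`, `bk + 1` divides `k * b^N + 1`. -/
theorem dvd_key (b K k : ℕ) (hb : 2 ≤ b) (hK : 1 ≤ K) (hk : 1 ≤ k) (hkK : k ≤ K) :
    (b * k + 1) ∣ (k * b ^ (Nat.factorial (b * K) + 1) + 1) := by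
  set m := b * k + 1 with hm
  have hm1 : 1 < m := by have : 1 ≤ b * k := Nat.one_le_iff_ne_zero.mpr (by positivity); omega
  have hcop : Nat.Coprime b m := by
    simp only [Nat.Coprime, hm, Nat.add_comm (b * k) 1, Nat.gcd_add_mul_left_right b 1 k,
      Nat.gcd_one_right]
  have hdvd : Nat.totient m ∣ Nat.factorial (b * K) := by
    apply Nat.dvd_factorial (Nat.totient_pos.mpr (by omega))
    have h1 : Nat.totient m < m := Nat.totient_lt m hm1
    have h2 : b * k ≤ b * K := Nat.mul_le_mul_left b hkK
    omega
  haveI : NeZero m := ⟨by omega⟩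
  have hu : (b : ZMod m) ^ Nat.factorial (b * K) = 1 := by
    obtain ⟨t, ht⟩ := hdvd
    have h1 := ZMod.pow_totient (ZMod.unitOfCoprime b hcop)
    have h2 : ((ZMod.unitOfCoprime b hcop : (ZMod m)ˣ) : ZMod m) = (b : ZMod m) :=
      ZMod.coe_unitOfCoprime b hcop
    rw [ht, pow_mul, ← h2, ← Units.val_pow_eq_pow_val, h1, Units.val_one, one_pow]
  have key : ((k * b ^ (Nat.factorial (b * K) + 1) + 1 : ℕ) : ZMod m) = 0 := by
    push_cast
    rw [pow_succ, hu, one_mul]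
    have : ((m : ℕ) : ZMod m) = 0 := ZMod.natCast_self m
    push_cast [hm] at this
    linear_combination this
  exact (ZMod.natCast_eq_zero_iff _ _).mp key
end

section
/- Let b ≥ 2, K ≥ 1, and 1 ≤ k ≤ K. Set N = (bK)! + 1. Then k · b^N + 1 is composite (i.e., not prime and greater than 1). -/
/-!
Put `m = b * k + 1`, which is coprime to `b`. As `φ m < m ≤ b * K + 1`, Euler's theorem
and `φ m ∣ (b * K)!` give `b ^ N ≡ b [MOD m]`, hence `k * b ^ N + 1 ≡ k * b + 1 ≡ 0 [MOD m]`.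
Since `1 < m < k * b ^ N + 1`, this is a proper divisor.
-/

open Nat

theorem Nat.pow_factorial_modEq_one {b m n : ℕ} (hcop : b.Coprime m) (hmn : m ≤ n + 1) :
    b ^ n ! ≡ 1 [MOD m] := by
  rcases Nat.lt_trichotomy m 1 with hm | rfl | hm
  · obtain rfl : m = 0 := by omega
    rw [b.coprime_zero_right.mp hcop, one_pow]
  · exact Nat.modEq_one
  · have hφ : φ m ∣ n ! :=
      Nat.dvd_factorial (Nat.totient_pos.mpr (by omega)) (by have := Nat.totient_lt m hm; omega)
    obtain ⟨t, ht⟩ := hφ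
    calc b ^ n ! = (b ^ φ m) ^ t := by rw [← pow_mul, ← ht]
      _ ≡ 1 ^ t [MOD m] := (Nat.ModEq.pow_totient hcop).pow t
      _ = 1 := one_pow t

theorem Nat.mul_add_one_dvd_mul_pow_factorial_succ_add_one {b k n : ℕ} (hbk : b * k ≤ n) :
    b * k + 1 ∣ k * b ^ (n ! + 1) + 1 := by
  have hcop : b.Coprime (b * k + 1) :=
    (Nat.coprime_mul_left_add_right b 1 k).mpr (coprime_one_right b)
  have hpow : b ^ n ! ≡ 1 [MOD b * k + 1] := Nat.pow_factorial_modEq_one hcop (by omega)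
  have hcong : k * b ^ (n ! + 1) + 1 ≡ k * (1 * b) + 1 [MOD b * k + 1] := by
    rw [pow_succ]
    exact ((hpow.mul_right b).mul_left k).add_right 1
  rw [one_mul, mul_comm k b] at hcong
  exact (hcong.dvd_iff dvd_rfl).mpr dvd_rfl

theorem composite_key_general (b K k : ℕ) (hb : 2 ≤ b) (hk : 1 ≤ k) (hkK : k ≤ K) :
    1 < k * b ^ (Nat.factorial (b * K) + 1) + 1 ∧
      ¬ Nat.Prime (k * b ^ (Nat.factorial (b * K) + 1) + 1) := by
  have hdvd : b * k + 1 ∣ k * b ^ ((b * K)! + 1) + 1 :=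
    Nat.mul_add_one_dvd_mul_pow_factorial_succ_add_one (Nat.mul_le_mul_left b hkK)
  have hbN : b < b ^ ((b * K)! + 1) :=
    lt_of_eq_of_lt (pow_one b).symm
      (Nat.pow_lt_pow_right hb (Nat.succ_lt_succ (Nat.factorial_pos _)))
  have hlt : b * k < k * b ^ ((b * K)! + 1) := by
    rw [mul_comm b k]
    exact Nat.mul_lt_mul_of_pos_left hbN hk
  have hbk : 2 ≤ b * k := le_trans hb (Nat.le_mul_of_pos_right b hk)
  exact ⟨by omega, Nat.not_prime_of_dvd_of_lt hdvd (by omega) (by omega)⟩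

/-- For `b ≥ 2`, `1 ≤ k ≤ K` and `N = (bK)! + 1`, the number `k * b^N + 1` is
composite, i.e. greater than `1` and not prime. -/
theorem composite_key (b K k : ℕ) (hb : 2 ≤ b) (hK : 1 ≤ K) (hk : 1 ≤ k) (hkK : k ≤ K) :
    1 < k * b ^ (Nat.factorial (b * K) + 1) + 1 ∧
      ¬ Nat.Prime (k * b ^ (Nat.factorial (b * K) + 1) + 1) :=
  composite_key_general b K k hb hk hkK
end

section
/- For every base b ≥ 2 and every K ≥ 1, there exists N ≥ 2 such that k · b^N + 1 is composite for all 1 ≤ k ≤ K. -/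
/-!
Since `b` is coprime to `k * b + 1`, Euler's theorem gives `b ^ m ≡ 1 [MOD k * b + 1]` whenever
`φ (k * b + 1) ∣ m`, and then `k * b + 1` is a proper divisor of `k * b ^ (m + 1) + 1`.
As `φ (k * b + 1) ≤ b * K + 1`, the single exponent `m = (b * K + 1)!` works for every `k ≤ K`.
-/

open Nat

theorem dvd_mul_pow_succ_add_one_of_totient_dvd {b k m : ℕ} (h : φ (k * b + 1) ∣ m) :
    k * b + 1 ∣ k * b ^ (m + 1) + 1 := by
  have hcop : b.Coprime (k * b + 1) := by
    rw [mul_comm]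
    exact (Nat.coprime_mul_left_add_right b 1 k).2 (Nat.coprime_one_right b)
  obtain ⟨c, rfl⟩ := h
  have hpow : b ^ (φ (k * b + 1) * c) ≡ 1 [MOD k * b + 1] := by
    simpa only [pow_mul, one_pow] using (Nat.ModEq.pow_totient hcop).pow c
  have hmod : k * b ^ (φ (k * b + 1) * c + 1) + 1 ≡ k * b + 1 [MOD k * b + 1] := by
    rw [pow_succ', ← mul_assoc]
    simpa only [mul_one] using (hpow.mul_left (k * b)).add_right 1
  exact Nat.modEq_zero_iff_dvd.1 (hmod.trans (Nat.modEq_zero_iff_dvd.2 dvd_rfl))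

theorem not_prime_mul_pow_succ_add_one {b k m : ℕ} (hb : 2 ≤ b) (hk : 1 ≤ k) (hm : 1 ≤ m)
    (h : φ (k * b + 1) ∣ m) : ¬ (k * b ^ (m + 1) + 1).Prime := by
  refine Nat.not_prime_of_dvd_of_lt (dvd_mul_pow_succ_add_one_of_totient_dvd h) (by nlinarith) ?_
  have : b ^ 1 < b ^ (m + 1) := Nat.pow_lt_pow_right hb (by omega)
  have : k * b ^ 1 < k * b ^ (m + 1) := Nat.mul_lt_mul_of_pos_left this hk
  simpa using this

theorem totient_mul_add_one_dvd_factorial {b k K : ℕ} (hk : k ≤ K) :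
    φ (k * b + 1) ∣ (b * K + 1)! := by
  refine Nat.dvd_factorial (Nat.totient_pos.2 (Nat.succ_pos _)) ((Nat.totient_le _).trans ?_)
  rw [mul_comm b]
  exact Nat.succ_le_succ (Nat.mul_le_mul_right b hk)

theorem exists_N_all_composite_general (b K : ℕ) (hb : 2 ≤ b) :
    ∃ N : ℕ, 2 ≤ N ∧ ∀ k : ℕ, 1 ≤ k → k ≤ K →
      1 < k * b ^ N + 1 ∧ ¬ Nat.Prime (k * b ^ N + 1) := by
  have hfac : 1 ≤ (b * K + 1)! := Nat.factorial_pos _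
  refine ⟨(b * K + 1)! + 1, by omega, fun k hk hkK => ⟨?_, ?_⟩⟩
  · have : 0 < k * b ^ ((b * K + 1)! + 1) := Nat.mul_pos hk (Nat.pow_pos (by omega))
    omega
  · exact not_prime_mul_pow_succ_add_one hb hk hfac (totient_mul_add_one_dvd_factorial hkK)

/-- For every base `b ≥ 2` and every `K ≥ 1`, there exists `N ≥ 2` such that
`k * b^N + 1` is composite for all `1 ≤ k ≤ K`. -/
theorem exists_N_all_composite (b K : ℕ) (hb : 2 ≤ b) (hK : 1 ≤ K) :
    ∃ N : ℕ, 2 ≤ N ∧ ∀ k : ℕ, 1 ≤ k → k ≤ K →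
      1 < k * b ^ N + 1 ∧ ¬ Nat.Prime (k * b ^ N + 1) :=
  exists_N_all_composite_general b K hb
end

section
/- The function f_b, defined as f_b(n) = least k ≥ 1 with k·b^n + 1 prime, is unbounded for every base b ≥ 2. -/
/-- `f b n` is the least `k ≥ 1` such that `k * b^n + 1` is prime. -/
noncomputable def f (b n : ℕ) : ℕ := sInf {k : ℕ | 1 ≤ k ∧ Nat.Prime (k * b ^ n + 1)}

/-- For every base `b ≥ 2`, the function `f b` is unbounded. -/
theorem f_unbounded (b : ℕ) (hb : 2 ≤ b) : ∀ K : ℕ, ∃ n : ℕ, 1 ≤ n ∧ K < f b n := by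
  intro K
  classical
  set p : ℕ → ℕ := fun k => (k * b + 1).minFac with hp
  have hpprime : ∀ k, 1 ≤ k → (p k).Prime := by
    intro k hk
    exact Nat.minFac_prime (by nlinarith)
  have hpdvd : ∀ k, p k ∣ k * b + 1 := fun k => Nat.minFac_dvd _
  have hpb : ∀ k, 1 ≤ k → ¬ (p k ∣ b) := by
    intro k hk hdvd
    have h1 : p k ∣ 1 := (Nat.dvd_add_right (Dvd.dvd.mul_left hdvd k)).mp (hpdvd k)
    exact (hpprime k hk).one_lt.ne' (Nat.dvd_one.mp h1)
  set D : ℕ := ∏ k ∈ Finset.Icc 1 K, (p k - 1) with hD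
  have hD1 : 1 ≤ D := by
    apply Finset.one_le_prod'
    intro k hk
    have := (hpprime k (Finset.mem_Icc.mp hk).1).two_le
    omega
  set n : ℕ := 1 + D with hn
  have hn2 : 2 ≤ n := by omega
  refine ⟨n, by omega, ?_⟩
  -- key: for 1 ≤ k ≤ K, k * b ^ n + 1 is not prime
  have hbn : b < b ^ n := by
    calc b = b ^ 1 := (pow_one b).symm
    _ < b ^ n := Nat.pow_lt_pow_right (by omega) (by omega)
  have key : ∀ k, 1 ≤ k → k ≤ K → ¬ Nat.Prime (k * b ^ n + 1) := by
    intro k hk1 hkK hprime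
    have hpk := hpprime k hk1
    haveI : Fact (p k).Prime := ⟨hpk⟩
    -- p k divides k * b ^ n + 1
    have hdvdD : (p k - 1) ∣ D := Finset.dvd_prod_of_mem _ (Finset.mem_Icc.mpr ⟨hk1, hkK⟩)
    obtain ⟨m, hm⟩ := hdvdD
    have hbne : (b : ZMod (p k)) ≠ 0 := by
      rw [Ne, ZMod.natCast_eq_zero_iff]
      exact hpb k hk1
    have hflt : (b : ZMod (p k)) ^ (p k - 1) = 1 := ZMod.pow_card_sub_one_eq_one hbne
    have hcast : ((k * b ^ n + 1 : ℕ) : ZMod (p k)) = 0 := by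
      have h0 : ((k * b + 1 : ℕ) : ZMod (p k)) = 0 := by
        rw [ZMod.natCast_eq_zero_iff]; exact hpdvd k
      push_cast at h0 ⊢
      rw [hn, hm, pow_add, pow_one, pow_mul, hflt, one_pow, mul_one]
      exact h0
    rw [ZMod.natCast_eq_zero_iff] at hcast
    rcases (hprime.eq_one_or_self_of_dvd _ hcast) with h | h
    · exact hpk.one_lt.ne' h
    · have hle : p k ≤ k * b + 1 := Nat.minFac_le (by positivity)
      nlinarith [hbn, hk1]
  -- the defining set is nonempty by Dirichlet
  haveI : NeZero (b ^ n) := ⟨by positivity⟩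
  obtain ⟨q, hq1, hq2, hq3⟩ :=
    Nat.forall_exists_prime_gt_and_eq_mod (a := (1 : ZMod (b ^ n))) isUnit_one (b ^ n)
  have hbn1 : 1 < b ^ n := by
    calc 1 < b := by omega
    _ < b ^ n := hbn
  have hmod : q % b ^ n = 1 := by
    have := (ZMod.natCast_eq_natCast_iff q 1 (b ^ n)).mp (by simpa using hq3)
    have h1 : 1 % b ^ n = 1 := Nat.mod_eq_of_lt hbn1
    unfold Nat.ModEq at this
    omega
  set k0 := q / b ^ n with hk0
  have hk0pos : 1 ≤ k0 := Nat.one_le_div_iff (by positivity) |>.mpr (le_of_lt hq1)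
  have hqeq : k0 * b ^ n + 1 = q := by
    have h := Nat.div_add_mod q (b ^ n)
    have h2 : k0 * b ^ n = b ^ n * (q / b ^ n) := mul_comm _ _
    omega
  have hmem : k0 ∈ {k : ℕ | 1 ≤ k ∧ Nat.Prime (k * b ^ n + 1)} := ⟨hk0pos, hqeq ▸ hq2⟩
  have hsInf := Nat.sInf_mem (Set.nonempty_of_mem hmem)
  obtain ⟨hge1, hprime⟩ := hsInf
  by_contra hcon
  push_neg at hcon
  exact key _ hge1 (by unfold f at hcon; omega) hprime
end

section
/- Let b ≥ 2, n ≥ 1, and 1 ≤ k < f_b(n), where f_b(n) is the least j ≥ 1 with j·b^n + 1 prime. Then the base-b representation of k·b^n + 1 is not in P_b^*, where P_b is the language of base-b representations of primes. -/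
open Computability

/-- The base-`b` representation of `m`, most significant digit first. -/
def repr' (b m : ℕ) : List ℕ := (Nat.digits b m).reverse

/-- The language of base-`b` representations of primes. -/
def P (b : ℕ) : Language ℕ := {w | ∃ p : ℕ, Nat.Prime p ∧ w = repr' b p}

/-- For `b ≥ 2`, `n ≥ 1`, `1 ≤ k < f b n`, the base-`b` representation of
`k * b^n + 1` is not in the Kleene star of `P b`. -/
theorem not_mem_kstar (b n k : ℕ) (hb : 2 ≤ b) (hn : 1 ≤ n) (hk : 1 ≤ k) (hkf : k < f b n) :
    repr' b (k * b ^ n + 1) ∉ (P b)∗ := by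
  intro hmem
  rw [Language.mem_kstar] at hmem
  obtain ⟨L, hw, hL⟩ := hmem
  set N := k * b ^ n + 1 with hN
  have hb1 : 1 < b := hb
  have hNne : N ≠ 0 := by positivity
  have hLne : L ≠ [] := by
    rintro rfl
    simp only [List.flatten_nil, repr'] at hw
    exact Nat.digits_ne_nil_iff_ne_zero.mpr hNne (by simpa using hw)
  obtain ⟨p, hp, hv⟩ := hL (L.getLast hLne) (List.getLast_mem hLne)
  have hsplit : L.flatten = (L.dropLast).flatten ++ L.getLast hLne := by
    conv_lhs => rw [← List.dropLast_append_getLast hLne]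
    simp
  rw [hsplit, hv] at hw
  have hdig : Nat.digits b N = Nat.digits b p ++ (L.dropLast).flatten.reverse := by
    have := congrArg List.reverse hw
    simpa [repr'] using this
  set t := Nat.ofDigits b (L.dropLast).flatten.reverse with ht
  set Len := (Nat.digits b p).length with hLen
  have hval : N = p + b ^ Len * t := by
    have h := Nat.ofDigits_digits b N
    rw [hdig, Nat.ofDigits_append, Nat.ofDigits_digits] at h
    exact h.symm
  have hplt : p < b ^ Len := Nat.lt_base_pow_length_digits hb1
  have hLpos : 1 ≤ Len := by
    rw [hLen]
    have : Nat.digits b p ≠ [] := Nat.digits_ne_nil_iff_ne_zero.mpr hp.ne_zero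
    exact List.length_pos_iff.mpr this
  by_cases hLn : Len ≤ n
  · -- short last block: p = 1, contradiction
    have hmodp : N % b ^ Len = p := by
      rw [hval, Nat.add_mul_mod_self_left]
      exact Nat.mod_eq_of_lt hplt
    obtain ⟨c, hc⟩ : b ^ Len ∣ k * b ^ n :=
      Dvd.dvd.mul_left (pow_dvd_pow b hLn) k
    have h1lt : 1 < b ^ Len := Nat.one_lt_pow (by omega) hb1
    have hmod1 : N % b ^ Len = 1 := by
      rw [hN, hc, Nat.mul_add_mod, Nat.mod_eq_of_lt h1lt]
    exact hp.ne_one (by omega)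
  · -- long last block: p = j * b^n + 1 with 1 ≤ j ≤ k, contradicting k < f b n
    push_neg at hLn
    obtain ⟨c, hc⟩ : b ^ n ∣ b ^ Len := pow_dvd_pow b hLn.le
    have hbn1 : 1 < b ^ n := Nat.one_lt_pow (by omega) hb1
    have hmodN : N % b ^ n = 1 := by
      rw [hN, Nat.add_comm, Nat.add_mul_mod_self_right, Nat.mod_eq_of_lt hbn1]
    have hmodp : p % b ^ n = 1 := by
      have : N % b ^ n = p % b ^ n := by
        rw [hval, hc, mul_assoc, Nat.add_mul_mod_self_left]
      omega
    have hpj : p = p / b ^ n * b ^ n + 1 := by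
      have h2 := Nat.div_add_mod p (b ^ n)
      rw [Nat.mul_comm] at h2
      omega
    have hj1 : 1 ≤ p / b ^ n := by
      rcases Nat.eq_zero_or_pos (p / b ^ n) with h0 | h
      · rw [h0] at hpj; simp at hpj; exact absurd hpj hp.ne_one
      · exact h
    have hfle : f b n ≤ p / b ^ n := Nat.sInf_le ⟨hj1, by rw [← hpj]; exact hp⟩
    have hpN : p ≤ N := by
      rw [hval]; exact Nat.le_add_right _ _
    have hjk : p / b ^ n ≤ k := by
      have hmul : p / b ^ n * b ^ n ≤ k * b ^ n := by omega
      exact Nat.le_of_mul_le_mul_right hmul (by positivity)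
    omega
end

section
/- For every base b ≥ 2, the language P_b^* (the Kleene star of the language of base-b representations of primes) is not regular. -/
open Computability

/-!
Suppose `(P b)∗` is regular. By Dirichlet's theorem for the progression `1 mod b^(N+1)` there is a
prime `D * b^(N+1) + 1`, written `repr' b D ++ 0^N ++ [1]`; for `N` large, pumping the block of
zeros keeps `repr' b D ++ 0^(N+td) ++ [1]` in `(P b)∗` for every `t`. The last block of such a word
cannot lie inside the final `0…01`, so it is a prime `S * b^(N+td+1) + 1` with `S ≤ D`.
On the other hand, finitely many values of `S` can be made to give composites simultaneously:
if `q = S * b^e + 1` is prime then `q ∣ S * b^(e + k(q-1)) + 1` by Fermat's little theorem, so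
each `S` is eliminated by passing to a subprogression of the exponents.
-/

theorem Nat.ofDigits_le_ofDigits_append (b : ℕ) (l₁ l₂ : List ℕ) :
    ofDigits b l₁ ≤ ofDigits b (l₁ ++ l₂) := by
  rw [ofDigits_append]
  exact Nat.le_add_right _ _

theorem Nat.exists_prime_mul_add_one {n : ℕ} (hn : n ≠ 0) : ∃ D, 0 < D ∧ (D * n + 1).Prime := by
  obtain ⟨p, hp, hnp, hmod⟩ := exists_prime_gt_modEq_one n hn
  obtain ⟨D, hD⟩ := (Nat.modEq_iff_dvd' hp.one_lt.le).1 hmod.symm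
  refine ⟨D, Nat.pos_of_ne_zero fun h => ?_, ?_⟩
  · simp [h] at hD
    omega
  · rwa [mul_comm, ← hD, Nat.sub_add_cancel hp.one_lt.le]

theorem mul_pow_add_one_dvd_of_prime {b S e : ℕ} (he : 0 < e) (hq : (S * b ^ e + 1).Prime)
    (k : ℕ) : S * b ^ e + 1 ∣ S * b ^ (e + k * (S * b ^ e)) + 1 := by
  set q := S * b ^ e + 1 with hq_def
  have hbq : b.Coprime q := by
    refine (hq.coprime_iff_not_dvd.2 fun hdvd => hq.one_lt.ne' ?_).symm
    have : q ∣ S * b ^ e := (dvd_pow hdvd he.ne').mul_left S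
    exact Nat.eq_one_of_dvd_one ((Nat.dvd_add_right this).1 dvd_rfl)
  have hfermat : b ^ (S * b ^ e) ≡ 1 [MOD q] := by
    simpa [hq_def] using Nat.ModEq.pow_card_sub_one_eq_one hq hbq
  refine Nat.modEq_zero_iff_dvd.1 ?_
  calc S * b ^ (e + k * (S * b ^ e)) + 1 = S * b ^ e * (b ^ (S * b ^ e)) ^ k + 1 := by ring
    _ ≡ S * b ^ e * 1 ^ k + 1 [MOD q] := ((hfermat.pow k).mul_left _).add_right 1
    _ = q := by ring
    _ ≡ 0 [MOD q] := Nat.modEq_zero_iff_dvd.2 dvd_rfl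

theorem exists_forall_not_prime_mul_pow_add_one {b : ℕ} (hb : 1 < b) (S : ℕ) {e c : ℕ}
    (he : 0 < e) (hc : 0 < c) :
    ∃ a m, 0 < m ∧ ∀ u, ¬ (S * b ^ (e + (a + u * m) * c) + 1).Prime := by
  by_cases hprime : ∃ u, (S * b ^ (e + u * c) + 1).Prime
  · obtain ⟨u₀, hq⟩ := hprime
    set e₀ := e + u₀ * c
    have hS : 0 < S := Nat.pos_of_ne_zero fun h => by simp [h, Nat.not_prime_one] at hq
    have hm : 0 < S * b ^ e₀ := by positivity
    refine ⟨u₀ + S * b ^ e₀, S * b ^ e₀, hm, fun u hprime => ?_⟩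
    have hexp : e + (u₀ + S * b ^ e₀ + u * (S * b ^ e₀)) * c =
        e₀ + ((u + 1) * c) * (S * b ^ e₀) := by ring
    rw [hexp] at hprime
    refine Nat.not_prime_of_dvd_of_lt (mul_pow_add_one_dvd_of_prime (by positivity) hq _)
      hq.two_le ?_ hprime
    have : e₀ < e₀ + ((u + 1) * c) * (S * b ^ e₀) := Nat.lt_add_of_pos_right (by positivity)
    gcongr
  · simp only [not_exists] at hprime
    exact ⟨0, 1, one_pos, fun u => by simpa using hprime u⟩

theorem Finset.exists_forall_not_prime_mul_pow_add_one {b : ℕ} (hb : 1 < b) (V : Finset ℕ)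
    {e c : ℕ} (he : 0 < e) (hc : 0 < c) :
    ∃ a m, 0 < m ∧ ∀ u, ∀ S ∈ V, ¬ (S * b ^ (e + (a + u * m) * c) + 1).Prime := by
  induction V using Finset.cons_induction generalizing e c with
  | empty => exact ⟨0, 1, one_pos, by simp⟩
  | cons S V _ ih =>
    obtain ⟨a, m, hm, hS⟩ := _root_.exists_forall_not_prime_mul_pow_add_one hb S he hc
    obtain ⟨a', m', hm', hV⟩ := ih (e := e + a * c) (c := m * c) (by positivity) (by positivity)
    refine ⟨a + a' * m, m * m', by positivity, fun u S' hS' => ?_⟩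
    rcases Finset.mem_cons.1 hS' with rfl | hS'
    · convert hS (a' + u * m') using 4
      ring
    · convert hV u S' hS' using 4
      ring

theorem DFA.pumping_lemma_infix {α σ : Type*} [Fintype σ] (M : DFA α σ) {x y z : List α}
    (h : x ++ y ++ z ∈ M.accepts) (hlen : Fintype.card σ ≤ y.length) :
    ∃ a b c, y = a ++ b ++ c ∧ a.length + b.length ≤ Fintype.card σ ∧ b ≠ [] ∧
      ∀ w ∈ ({a} * {b}∗ * {c} : Language α), x ++ w ++ z ∈ M.accepts := by
  let M' : DFA α σ := ⟨M.step, M.eval x, {s | M.evalFrom s z ∈ M.accept}⟩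
  have hM' : ∀ w, w ∈ M'.accepts ↔ x ++ w ++ z ∈ M.accepts := fun w => by
    simp only [mem_accepts, eval, evalFrom_of_append]
    rfl
  obtain ⟨a, b, c, hy, hab, hb, hpump⟩ := M'.pumping_lemma ((hM' y).2 h) hlen
  exact ⟨a, b, c, hy, hab, hb, fun w hw => (hM' w).1 (hpump hw)⟩

theorem Language.IsRegular.pumping_lemma_replicate {α : Type*} {L : Language α}
    (hL : L.IsRegular) :
    ∃ N, ∀ (x z : List α) (a : α) (m : ℕ), N ≤ m → x ++ List.replicate m a ++ z ∈ L →
      ∃ d, 0 < d ∧ ∀ t, x ++ List.replicate (m + t * d) a ++ z ∈ L := by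
  obtain ⟨σ, _, M, rfl⟩ := hL
  refine ⟨Fintype.card σ, fun x z a m hm h => ?_⟩
  obtain ⟨u, v, w, huvw, -, hv, hpump⟩ := M.pumping_lemma_infix h (by simpa using hm)
  have hrep : ∀ l, l <:+: List.replicate m a → l = List.replicate l.length a := fun l hl =>
    List.eq_replicate_iff.2 ⟨rfl, fun c hc => List.eq_of_mem_replicate (hl.subset hc)⟩
  rw [huvw] at hrep
  obtain ⟨i, rfl⟩ : ∃ i, u = List.replicate i a := ⟨_, hrep u ⟨[], v ++ w, by simp⟩⟩
  obtain ⟨d, rfl⟩ : ∃ d, v = List.replicate d a := ⟨_, hrep v ⟨List.replicate i a, w, rfl⟩⟩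
  obtain ⟨k, rfl⟩ : ∃ k, w = List.replicate k a :=
    ⟨_, hrep w ⟨List.replicate i a ++ List.replicate d a, [], by simp⟩⟩
  have hm : m = i + d + k := by simpa [add_assoc] using congrArg List.length huvw
  refine ⟨d, Nat.pos_of_ne_zero (by simpa using hv), fun t => ?_⟩
  convert hpump (List.replicate i a ++ (List.replicate (t + 1) (List.replicate d a)).flatten ++
    List.replicate k a) ?_ using 2
  · simp only [List.flatten_replicate_replicate, List.replicate_append_replicate, hm]
    ring_nf
  · exact Language.append_mem_mul (Language.append_mem_mul rfl
      (Language.join_mem_kstar fun y hy => List.eq_of_mem_replicate hy)) rfl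

theorem repr'_mul_pow_add_one {b : ℕ} (hb : 1 < b) {D : ℕ} (hD : 0 < D) (m : ℕ) :
    repr' b (D * b ^ (m + 1) + 1) = repr' b D ++ List.replicate m 0 ++ [1] := by
  have h := Nat.digits_append_zeroes_append_digits (n := 1) (k := m) hb hD
  rw [Nat.digits_of_lt b 1 one_ne_zero hb] at h
  simp only [repr', add_comm 1, mul_comm D, List.length_singleton] at h ⊢
  simp [← h]

theorem exists_prime_of_repr'_append_replicate_mem_kstar {b D m : ℕ}
    (h : repr' b D ++ List.replicate m 0 ++ [1] ∈ (P b)∗) :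
    ∃ S ≤ D, (S * b ^ (m + 1) + 1).Prime := by
  rw [← Language.one_add_kstar_mul_self_eq_kstar] at h
  obtain h | ⟨u, -, s, ⟨q, hq, rfl⟩, hw⟩ := (Language.mem_add _ _ _).1 h
  · simp [Language.mem_one] at h
  have key : Nat.digits b q ++ u.reverse = (1 :: List.replicate m 0) ++ Nat.digits b D := by
    simpa [repr'] using congrArg List.reverse hw
  have hofDigits : Nat.ofDigits b (1 :: List.replicate m 0) = 1 := by
    simp [Nat.ofDigits_cons, Nat.ofDigits_replicate_zero]
  rcases List.append_eq_append_iff.1 key with ⟨l, hl, -⟩ | ⟨l, hl, hD⟩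
  · have : q ≤ 1 :=
      calc q = Nat.ofDigits b (Nat.digits b q) := (Nat.ofDigits_digits b q).symm
        _ ≤ Nat.ofDigits b (Nat.digits b q ++ l) := Nat.ofDigits_le_ofDigits_append _ _ _
        _ = 1 := by rw [← hl, hofDigits]
    exact absurd hq.two_le (by omega)
  · refine ⟨Nat.ofDigits b l, ?_, ?_⟩
    · calc Nat.ofDigits b l ≤ Nat.ofDigits b (l ++ u.reverse) :=
            Nat.ofDigits_le_ofDigits_append _ _ _
        _ = D := by rw [← hD, Nat.ofDigits_digits]
    · convert hq
      rw [← Nat.ofDigits_digits b q, hl, Nat.ofDigits_append, hofDigits]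
      simp only [List.length_cons, List.length_replicate]
      ring

/-- For every base `b ≥ 2`, the Kleene star of the language of base-`b`
representations of primes is not regular. -/
theorem kstar_primes_not_regular (b : ℕ) (hb : 2 ≤ b) :
    ¬ ((P b)∗).IsRegular := by
  intro hreg
  obtain ⟨N, hpump⟩ := hreg.pumping_lemma_replicate
  obtain ⟨D, hD, hp⟩ := Nat.exists_prime_mul_add_one (pow_ne_zero (N + 1) (by omega : b ≠ 0))
  have hmem : repr' b D ++ List.replicate N 0 ++ [1] ∈ (P b)∗ := by
    rw [← repr'_mul_pow_add_one hb hD]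
    exact le_kstar (a := P b) ⟨_, hp, rfl⟩
  obtain ⟨d, hd, hpumped⟩ := hpump _ _ 0 N le_rfl hmem
  obtain ⟨a, m, -, hcomposite⟩ :=
    (Finset.range (D + 1)).exists_forall_not_prime_mul_pow_add_one hb N.succ_pos hd
  obtain ⟨S, hSD, hS⟩ := exists_prime_of_repr'_append_replicate_mem_kstar (hpumped a)
  refine hcomposite 0 S (Finset.mem_range_succ_iff.2 hSD) ?_
  simpa [add_right_comm] using hS
end

section
/- For every base b ≥ 2, the language P_b of base-b representations of primes is not regular. -/
def wordValue (b : ℕ) (w : List ℕ) : ℕ := Nat.ofDigits b w.reverse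

theorem wordValue_append (b : ℕ) (u v : List ℕ) :
    wordValue b (u ++ v) = wordValue b u * b ^ v.length + wordValue b v := by
  simp only [wordValue, List.reverse_append, Nat.ofDigits_append, List.length_reverse]
  ring

theorem wordValue_repr' (b m : ℕ) : wordValue b (repr' b m) = m := by
  simp [wordValue, repr', Nat.ofDigits_digits]

theorem exists_pos_wordValue_replicate_cast_eq {b q : ℕ} [NeZero q] (hbq : b.Coprime q)
    (y : List ℕ) : ∃ N, 0 < N ∧ ∀ x z : List ℕ,
      (wordValue b (x ++ (List.replicate N y).flatten ++ z) : ZMod q) = wordValue b (x ++ z) := by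
  let φ : Equiv.Perm (ZMod q) :=
    (Units.mulRight (ZMod.unitOfCoprime b hbq ^ y.length)).trans
      (Equiv.addRight (wordValue b y : ZMod q))
  have hφ : ∀ x k, (wordValue b (x ++ (List.replicate k y).flatten) : ZMod q) =
      (φ ^ k) (wordValue b x) := by
    intro x k
    induction k with
    | zero => simp
    | succ k ih =>
      rw [List.replicate_succ', List.flatten_append, List.flatten_singleton, ← List.append_assoc,
        wordValue_append, pow_succ', Equiv.Perm.mul_apply, ← ih]
      simp [φ]
  refine ⟨orderOf φ, orderOf_pos φ, fun x z => ?_⟩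
  rw [wordValue_append, wordValue_append b x z]
  push_cast
  rw [hφ, pow_orderOf_eq_one, Equiv.Perm.one_apply]

/-- For every base `b ≥ 2`, the language of base-`b` representations of primes is
not regular. -/
theorem primes_not_regular (b : ℕ) (hb : 2 ≤ b) : ¬ (P b).IsRegular := by
  rintro ⟨σ, _, M, hM⟩
  obtain ⟨q, hqb, hq⟩ := Nat.exists_infinite_primes (b ^ Fintype.card σ + b)
  have : NeZero q := ⟨hq.ne_zero⟩
  have hbq : b.Coprime q :=
    (Nat.coprime_of_lt_prime (by omega) ((Nat.lt_add_of_pos_left (by positivity)).trans_le hqb) hq).symm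
  have hlen : Fintype.card σ ≤ (repr' b q).length := by
    rw [repr', List.length_reverse]
    exact ((Nat.lt_digits_length_iff hb q).mpr (by omega)).le
  obtain ⟨x, y, z, hxyz, -, hy, hpump⟩ := M.pumping_lemma (hM ▸ ⟨q, hq, rfl⟩) hlen
  obtain ⟨N, hN, hperiod⟩ := exists_pos_wordValue_replicate_cast_eq hbq y
  set w := x ++ (List.replicate N y).flatten ++ (y ++ z)
  have hw : w ∈ P b := by
    rw [← hM]
    refine hpump ⟨x ++ (List.replicate (N + 1) y).flatten,
      ⟨x, rfl, _, Language.join_mem_kstar fun _ hv => List.eq_of_mem_replicate hv, rfl⟩,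
      z, rfl, ?_⟩
    simp [w, List.replicate_succ']
  obtain ⟨p, hp, hwp⟩ := hw
  have hqp : q ∣ p := by
    rw [← ZMod.natCast_eq_zero_iff, ← wordValue_repr' b p, ← hwp, hperiod, ← List.append_assoc,
      ← hxyz, wordValue_repr', ZMod.natCast_self]
  obtain rfl := (Nat.prime_dvd_prime_iff_eq hq hp).mp hqp
  simpa [w, hN.ne', hy] using congrArg List.length (hwp.trans hxyz)
end

section
/- For every base b ≥ 2 and every p ≥ 1, there exists a prime q whose base-b representation s satisfies: s = (f)_b 0^{N-1} 1 for some N ≥ 2 and f > b^p, and for every j with 1 ≤ j < f, the number j · b^N + 1 is composite. -/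
/-- Covering lemma: there is a period `M` such that for every `1 ≤ j ≤ S`,
some fixed divisor `r ≤ j*b+1` divides `j * b^(1+M*t) + 1` for all `t`. -/
lemma cover_lemma (b : ℕ) (hb : 2 ≤ b) (S : ℕ) :
    ∃ M : ℕ, 1 ≤ M ∧ ∀ j, 1 ≤ j → j ≤ S →
      ∃ r, 1 < r ∧ r ≤ j * b + 1 ∧ ∀ t, r ∣ j * b ^ (1 + M * t) + 1 := by
  induction S with
  | zero => exact ⟨1, le_refl 1, fun j hj hj0 => absurd (hj.trans hj0) (by norm_num)⟩
  | succ S ih =>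
    obtain ⟨M, hM, hcov⟩ := ih
    set n := (S + 1) * b + 1 with hn
    have hn2 : 2 ≤ n := by nlinarith
    set r := n.minFac with hr
    have hrp : r.Prime := Nat.minFac_prime (by omega)
    have hrn : r ∣ n := Nat.minFac_dvd n
    have hr1 : 1 < r := hrp.one_lt
    have hrle : r ≤ n := Nat.le_of_dvd (by omega) hrn
    -- r does not divide b
    have hrb : ¬ r ∣ b := by
      intro h
      have := Nat.dvd_one.mp ((Nat.dvd_add_right (Dvd.dvd.mul_left h (S + 1))).mp hrn)
      omega
    haveI : Fact r.Prime := ⟨hrp⟩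
    have hb0 : (b : ZMod r) ≠ 0 := by
      rw [Ne, ZMod.natCast_eq_zero_iff]; exact hrb
    have hfermat : (b : ZMod r) ^ (r - 1) = 1 := ZMod.pow_card_sub_one_eq_one hb0
    refine ⟨M * (r - 1), Nat.one_le_iff_ne_zero.mpr (Nat.mul_ne_zero (by omega) (by omega)), fun j hj hjS => ?_⟩
    rcases Nat.lt_or_ge j (S + 1) with hlt | hge
    · obtain ⟨r', h1, h2, h3⟩ := hcov j hj (by omega)
      exact ⟨r', h1, h2, fun t => by
        have := h3 ((r - 1) * t); rwa [← mul_assoc] at this⟩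
    · have hjeq : j = S + 1 := le_antisymm hjS hge
      subst hjeq
      refine ⟨r, hr1, by rwa [← hn], fun t => ?_⟩
      rw [← ZMod.natCast_eq_zero_iff]
      have hexp : (1 : ℕ) + M * (r - 1) * t = 1 + (r - 1) * (M * t) := by ring
      rw [hexp]
      push_cast
      rw [pow_add, pow_mul, hfermat, one_pow, pow_one, mul_one]
      have : ((n : ℕ) : ZMod r) = 0 := by
        rw [ZMod.natCast_eq_zero_iff]; exact hrn
      rw [hn] at this
      push_cast at this
      linear_combination this

/-- For every `b ≥ 2` and `p ≥ 1`, there is a prime `q` whose base-`b`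
representation is `(f)_b 0^(N-1) 1` with `N ≥ 2`, `f > b^p`, and `j * b^N + 1`
composite for all `1 ≤ j < f`. -/
theorem exists_prime_special (b p : ℕ) (hb : 2 ≤ b) (hp : 1 ≤ p) :
    ∃ q N f : ℕ, Nat.Prime q ∧ 2 ≤ N ∧ b ^ p < f ∧
      repr' b q = repr' b f ++ List.replicate (N - 1) 0 ++ [1] ∧
      ∀ j : ℕ, 1 ≤ j → j < f → 1 < j * b ^ N + 1 ∧ ¬ Nat.Prime (j * b ^ N + 1) := by
  obtain ⟨M, hM, hcov⟩ := cover_lemma b hb (b ^ p)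
  set N := 1 + M with hN
  have hN2 : 2 ≤ N := by omega
  have hbN : (0:ℕ) < b ^ N := pow_pos (by omega) N
  -- Dirichlet: a prime ≡ 1 mod b^N, bigger than b^N
  obtain ⟨q0, hq0p, hq0gt, hq0mod⟩ :=
    Nat.exists_prime_gt_modEq_one (k := b ^ N) (b ^ N) (by omega)
  have hdvd : b ^ N ∣ q0 - 1 := (Nat.modEq_iff_dvd' (by omega)).mp hq0mod.symm
  obtain ⟨f0, hf0⟩ := hdvd
  have hf0q : f0 * b ^ N + 1 = q0 := by
    have : q0 - 1 = b ^ N * f0 := hf0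
    rw [mul_comm] at this
    omega
  have hQ : ∃ f : ℕ, Nat.Prime (f * b ^ N + 1) := ⟨f0, hf0q ▸ hq0p⟩
  set f := Nat.find hQ with hfdef
  have hfprime : Nat.Prime (f * b ^ N + 1) := Nat.find_spec hQ
  have hfmin : ∀ j, j < f → ¬ Nat.Prime (j * b ^ N + 1) := fun j hj => Nat.find_min hQ hj
  have hf1 : 1 ≤ f := by
    rcases Nat.eq_zero_or_pos f with h | h
    · exfalso; rw [h] at hfprime; simp at hfprime; exact Nat.not_prime_one hfprime
    · exact h
  have hfgt : b ^ p < f := by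
    by_contra hle
    push_neg at hle
    obtain ⟨r, hr1, hrle, hrdvd⟩ := hcov f hf1 hle
    have hdvdN : r ∣ f * b ^ N + 1 := by
      have := hrdvd 1; rwa [mul_one] at this
    have := (Nat.Prime.eq_one_or_self_of_dvd hfprime r hdvdN).resolve_left (by omega)
    have hlt : f * b + 1 < f * b ^ N + 1 := by
      have : b < b ^ N := by
        calc b = b ^ 1 := (pow_one b).symm
        _ < b ^ N := Nat.pow_lt_pow_right (by omega) (by omega)
      nlinarith [hf1, this]
    omega
  refine ⟨f * b ^ N + 1, N, f, hfprime, hN2, hfgt, ?_, fun j hj hjf =>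
    ⟨by nlinarith, hfmin j hjf⟩⟩
  -- digits computation
  have hdig : Nat.digits b (f * b ^ N + 1) =
      Nat.digits b 1 ++ List.replicate (N - 1) 0 ++ Nat.digits b f := by
    rw [Nat.digits_append_zeroes_append_digits (by omega) (by omega)]
    congr 1
    have hlen : (Nat.digits b 1).length = 1 := by
      rw [Nat.digits_def' (by omega : 1 < b) (by omega)]
      rw [Nat.mod_eq_of_lt (by omega), Nat.div_eq_of_lt (by omega),
      Nat.digits_zero]
      rfl
    rw [hlen]
    have : 1 + (N - 1) = N := by omega
    rw [this]; ring
  have hdig1 : Nat.digits b 1 = [1] := by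
    rw [Nat.digits_def' (by omega : 1 < b) (by omega)]
    rw [Nat.mod_eq_of_lt (by omega), Nat.div_eq_of_lt (by omega),
      Nat.digits_zero]
  unfold repr'
  rw [hdig, hdig1]
  simp
end

section
/- Let b ≥ 2 and n ≥ 2, and suppose 1 ≤ k < f_b(n). Then no suffix of the string (k)_b 0^{n-1} 1 is the base-b representation of a prime. -/
lemma ofDigits_replicate_zero (b m : ℕ) : Nat.ofDigits b (List.replicate m 0) = 0 := by
  induction m with
  | zero => simp [Nat.ofDigits]
  | succ m ih => simp [List.replicate_succ, Nat.ofDigits, ih]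

/-- For `b ≥ 2`, `n ≥ 2`, `1 ≤ k < f b n`, no suffix of `(k)_b 0^(n-1) 1` is the
base-`b` representation of a prime. -/
theorem no_suffix_prime (b n k : ℕ) (hb : 2 ≤ b) (hn : 2 ≤ n) (hk : 1 ≤ k)
    (hkf : k < f b n) (s : List ℕ)
    (hs : s <:+ repr' b k ++ List.replicate (n - 1) 0 ++ [1]) :
    ¬ ∃ p : ℕ, Nat.Prime p ∧ s = repr' b p := by
  rintro ⟨p, hp, rfl⟩
  have h1 : Nat.digits b p <+: 1 :: (List.replicate (n - 1) 0 ++ Nat.digits b k) := by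
    have := hs.reverse
    simpa [repr', List.reverse_append] using this
  obtain ⟨u, hu⟩ := h1
  rcases hd : Nat.digits b p with _ | ⟨d, t⟩
  · exact hp.ne_zero (Nat.digits_eq_nil_iff_eq_zero.mp hd)
  · rw [hd] at hu
    simp only [List.cons_append, List.cons.injEq] at hu
    obtain ⟨hd1, htu⟩ := hu
    subst hd1
    have hpval : p = Nat.ofDigits b (1 :: t) := by
      conv_lhs => rw [← Nat.ofDigits_digits b p, hd]
    rcases List.append_eq_append_iff.mp htu with ⟨a', ha1, ha2⟩ | ⟨c', hc1, hc2⟩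
    · -- t is a prefix of the replicate: all zeros, so p = 1
      have ht0 : t = List.replicate t.length 0 := by
        rw [List.eq_replicate_iff]
        refine ⟨rfl, fun x hx => ?_⟩
        exact List.eq_of_mem_replicate (ha1 ▸ List.mem_append_left a' hx)
      have : p = 1 := by
        rw [hpval, ht0]
        simp [Nat.ofDigits, ofDigits_replicate_zero]
      exact hp.one_lt.ne' this
    · -- t = replicate (n-1) 0 ++ c', c' a prefix of digits b k
      set k' := Nat.ofDigits b c' with hk'
      have hpval2 : p = k' * b ^ n + 1 := by
        rw [hpval, hc1]
        rw [show (1 : ℕ) :: (List.replicate (n - 1) 0 ++ c') = [1] ++ (List.replicate (n - 1) 0 ++ c') from rfl]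
        rw [Nat.ofDigits_append, Nat.ofDigits_append]
        simp [Nat.ofDigits, ofDigits_replicate_zero]
        rw [← mul_assoc, ← pow_succ', Nat.sub_add_cancel (by omega : 1 ≤ n)]
        ring
      have hk'pos : 1 ≤ k' := by
        rcases Nat.eq_zero_or_pos k' with h0 | h1
        · rw [h0] at hpval2
          simp at hpval2
          exact absurd hpval2 hp.one_lt.ne'
        · exact h1
      have hk'le : k' ≤ k := by
        conv_rhs => rw [← Nat.ofDigits_digits b k, hc2]
        rw [Nat.ofDigits_append]
        exact Nat.le_add_right _ _
      have : f b n ≤ k' := Nat.sInf_le ⟨hk'pos, hpval2 ▸ hp⟩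
      omega
end
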